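/- arXiv:1711.00697 — 2 statements merged into one kernel-verified Lean document; each statement's English description precedes it below -/
import Mathlib

section
/- Let N : L(A) → L(B) be a CPTP map and N̂ : L(A) → L(B) a completely positive map between finite-dimensional complex Hilbert spaces, and let 0 < ε < 1. Assume that for every density operator ρ on A one has −ε(N(ρ) + 1_B/|B|) ≤ N̂(ρ) − N(ρ) ≤ ε(N(ρ) + 1_B/|B|) in the Loewner order. Then for every p ∈ [1,∞] and every density operator ρ on A, ‖N̂(ρ) − N(ρ)‖_p ≤ ε(‖N(ρ)‖_p + 1/|B|^{1−1/p}). -/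
/-!
Write `X = N̂(ρ) - N(ρ) = ∑ λᵢ |vᵢ⟩⟨vᵢ|`. Testing the two-sided Loewner bound against `vᵢ` gives
`|λᵢ| ≤ ε (⟨vᵢ|N(ρ)|vᵢ⟩ + 1/|B|)`. As `‖X‖_p` is the `ℓ^p` norm of `(λᵢ)`, the triangle inequality
in `ℓ^p` splits off the constant vector `1/|B|`, of norm `|B|^(1/p - 1)`. The diagonal
`(⟨vᵢ|N(ρ)|vᵢ⟩)ᵢ` is the image of the eigenvalues of `N(ρ)`, with eigenvectors `wⱼ`, under the
doubly stochastic matrix `(|⟨vᵢ|wⱼ⟩|²)ᵢⱼ`, which does not increase `ℓ^p` norms; so its norm is at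
most `‖N(ρ)‖_p`.
-/

open scoped Kronecker ENNReal ComplexOrder
open Matrix MeasureTheory

noncomputable section
attribute [local instance] Classical.propDecidable

/-- The singular values of a square complex matrix. -/
def singularValues {m : Type*} [Fintype m] [DecidableEq m] (X : Matrix m m ℂ) : m → ℝ :=
  fun i => Real.sqrt ((Matrix.posSemidef_conjTranspose_mul_self X).1.eigenvalues i)

/-- The Schatten `p`-norm of a square complex matrix (`p = ⊤` giving the operator norm). -/
def schattenNorm {m : Type*} [Fintype m] [DecidableEq m] (p : ℝ≥0∞) (X : Matrix m m ℂ) : ℝ :=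
  if p = ⊤ then ⨆ i, singularValues X i
  else (∑ i, singularValues X i ^ p.toReal) ^ (1 / p.toReal)

/-- `Φ` has the Kraus decomposition given by the family `K`. -/
def HasKraus {a b : Type*} [Fintype a] [Fintype b] {s : ℕ}
    (Φ : Matrix a a ℂ → Matrix b b ℂ) (K : Fin s → Matrix b a ℂ) : Prop :=
  ∀ X, Φ X = ∑ i, K i * X * (K i)ᴴ

/-- Completely positive map: admits some Kraus decomposition. -/
def IsCP {a b : Type*} [Fintype a] [Fintype b]
    (Φ : Matrix a a ℂ → Matrix b b ℂ) : Prop :=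
  ∃ (s : ℕ) (K : Fin s → Matrix b a ℂ), HasKraus Φ K

/-- Trace preserving map. -/
def IsTP {a b : Type*} [Fintype a] [Fintype b]
    (Φ : Matrix a a ℂ → Matrix b b ℂ) : Prop :=
  ∀ X, (Φ X).trace = X.trace

/-- Completely positive and trace preserving map. -/
def IsCPTP {a b : Type*} [Fintype a] [Fintype b]
    (Φ : Matrix a a ℂ → Matrix b b ℂ) : Prop :=
  IsCP Φ ∧ IsTP Φ

/-- The Kraus rank: minimal number of Kraus operators. -/
def krausRank {a b : Type*} [Fintype a] [Fintype b]
    (Φ : Matrix a a ℂ → Matrix b b ℂ) : ℕ :=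
  sInf {s : ℕ | ∃ K : Fin s → Matrix b a ℂ, HasKraus Φ K}

/-- A density operator: positive semidefinite with trace one. -/
def IsDensity {a : Type*} [Fintype a] [DecidableEq a] (ρ : Matrix a a ℂ) : Prop :=
  ρ.PosSemidef ∧ ρ.trace = 1

/-- Loewner order. -/
def loewnerLE {a : Type*} [Fintype a] (X Y : Matrix a a ℂ) : Prop :=
  (Y - X).PosSemidef

/-- von Neumann entropy. -/
def vonNeumannEntropy {a : Type*} [Fintype a] [DecidableEq a] (ρ : Matrix a a ℂ) : ℝ :=
  if h : ρ.IsHermitian then -∑ i, h.eigenvalues i * Real.log (h.eigenvalues i) else 0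

/-- Rényi entropy of order `p ∈ (1,∞]`. -/
def renyiEntropy {a : Type*} [Fintype a] [DecidableEq a] (p : ℝ≥0∞) (ρ : Matrix a a ℂ) : ℝ :=
  if p = ⊤ then -Real.log (schattenNorm ⊤ ρ)
  else -(p.toReal / (p.toReal - 1)) * Real.log (schattenNorm p ρ)

/-- The factor `p/(p-1)`, read as `1` for `p = ∞`. -/
def pFactor (p : ℝ≥0∞) : ℝ := if p = ⊤ then 1 else p.toReal / (p.toReal - 1)

/-- Square root of a positive semidefinite matrix (junk value otherwise). -/
def psdSqrt {a : Type*} [Fintype a] [DecidableEq a] (ρ : Matrix a a ℂ) : Matrix a a ℂ :=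
  if h : ρ.PosSemidef then
    (h.1.eigenvectorUnitary : Matrix a a ℂ) * diagonal ((↑) ∘ Real.sqrt ∘ h.1.eigenvalues) *
      (star h.1.eigenvectorUnitary : Matrix a a ℂ)
  else 0

/-- Fidelity `F(σ, ω) = ‖√σ √ω‖₁`. -/
def fidelity {a : Type*} [Fintype a] [DecidableEq a] (σ ω : Matrix a a ℂ) : ℝ :=
  schattenNorm 1 (psdSqrt σ * psdSqrt ω)

/-- Rank-one projection `|v⟩⟨v|`. -/
def projVec {a : Type*} (v : a → ℂ) : Matrix a a ℂ :=
  Matrix.of fun i j => v i * star (v j)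

/-- Partial trace over the second tensor factor. -/
def ptraceSnd {b e : Type*} [Fintype e] (M : Matrix (b × e) (b × e) ℂ) : Matrix b b ℂ :=
  Matrix.of fun i j => ∑ k, M (i, k) (j, k)

/-- Partial trace over the first tensor factor. -/
def ptraceFst {b e : Type*} [Fintype b] (M : Matrix (b × e) (b × e) ℂ) : Matrix e e ℂ :=
  Matrix.of fun k l => ∑ i, M (i, k) (i, l)

/-- The channel `ρ ↦ tr_E (V ρ V†)` associated to an isometry `V : A → B ⊗ E`. -/
def stineChan {a b e : Type*} [Fintype a] [Fintype b] [Fintype e]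
    (V : Matrix (b × e) a ℂ) : Matrix a a ℂ → Matrix b b ℂ :=
  fun ρ => ptraceSnd (V * ρ * Vᴴ)

/-- The CP map `N_φ : ρ ↦ |E| tr_E ((1 ⊗ |φ⟩⟨φ|) V ρ V† (1 ⊗ |φ⟩⟨φ|))`. -/
def stineChanPinned {a b e : Type*} [Fintype a] [Fintype b] [Fintype e] [DecidableEq b]
    (V : Matrix (b × e) a ℂ) (φ : e → ℂ) : Matrix a a ℂ → Matrix b b ℂ :=
  fun ρ => (Fintype.card e : ℂ) •
    ptraceSnd (((1 : Matrix b b ℂ) ⊗ₖ projVec φ) * (V * ρ * Vᴴ) * ((1 : Matrix b b ℂ) ⊗ₖ projVec φ))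

/-- `⟨y| M |y⟩`. -/
def qForm {b : Type*} [Fintype b] (y : b → ℂ) (M : Matrix b b ℂ) : ℂ :=
  star y ⬝ᵥ M *ᵥ y

/-- The uniform (Haar, rotation-invariant) probability measure on the unit sphere of `ℂ^s`. -/
def IsUniformOnSphere {s : ℕ} (μ : Measure (Fin s → ℂ)) : Prop :=
  IsProbabilityMeasure μ ∧
  μ {v : Fin s → ℂ | ∑ i, ‖v i‖ ^ 2 = 1}ᶜ = 0 ∧
  ∀ U ∈ Matrix.unitaryGroup (Fin s) ℂ, μ.map (fun v => U *ᵥ v) = μ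

namespace PiLp

variable {ι : Type*} [Fintype ι] {p : ℝ≥0∞} [Fact (1 ≤ p)]

lemma norm_toLp_le_norm_toLp {f g : ι → ℝ} (h : ∀ i, |f i| ≤ |g i|) :
    ‖WithLp.toLp p f‖ ≤ ‖WithLp.toLp p g‖ := by
  rcases p.dichotomy with rfl | hp
  · simp only [norm_eq_ciSup, Real.norm_eq_abs]
    exact ciSup_mono (Set.finite_range _).bddAbove h
  · have hp0 : 0 < p.toReal := by linarith
    simp only [norm_eq_sum hp0, Real.norm_eq_abs]
    gcongr ?_ ^ _
    exact Finset.sum_le_sum fun i _ => Real.rpow_le_rpow (abs_nonneg _) (h i) hp0.le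

lemma norm_toLp_eq_of_map_abs_eq {f g : ι → ℝ}
    (h : Finset.univ.val.map (fun i => |f i|) = Finset.univ.val.map (fun i => |g i|)) :
    ‖WithLp.toLp p f‖ = ‖WithLp.toLp p g‖ := by
  have hmap (φ : ℝ → ℝ) :
      Finset.univ.val.map (fun i => φ ‖f i‖) = Finset.univ.val.map (fun i => φ ‖g i‖) := by
    simpa [Multiset.map_map, Function.comp_def] using congrArg (Multiset.map φ) h
  rcases p.dichotomy with rfl | hp
  · have hrange : Set.range (fun i => ‖f i‖) = Set.range (fun i => ‖g i‖) := by
      ext x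
      simpa using congrArg (x ∈ ·) (hmap id)
    simp only [norm_eq_ciSup]
    exact congrArg sSup hrange
  · have hp0 : 0 < p.toReal := by linarith
    simp only [norm_eq_sum hp0]
    congr 1
    simpa [Finset.sum_map_val] using congrArg Multiset.sum (hmap (· ^ p.toReal))

lemma norm_toLp_comp_perm (f : ι → ℝ) (σ : Equiv.Perm ι) :
    ‖WithLp.toLp p (f ∘ σ)‖ = ‖WithLp.toLp p f‖ :=
  (LinearIsometryEquiv.piLpCongrLeft p ℝ ℝ σ.symm).norm_map (WithLp.toLp p f)

/-- By Birkhoff's theorem `M` is a convex combination of permutation matrices, and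
`M ↦ ‖M *ᵥ x‖` is convex, so it is maximal at a permutation matrix. -/
lemma norm_toLp_mulVec_le [DecidableEq ι] {M : Matrix ι ι ℝ} (hM : M ∈ doublyStochastic ℝ ι)
    (x : ι → ℝ) : ‖WithLp.toLp p (M *ᵥ x)‖ ≤ ‖WithLp.toLp p x‖ := by
  let L : Matrix ι ι ℝ →ₗ[ℝ] PiLp p (fun _ : ι => ℝ) :=
    (WithLp.linearEquiv p ℝ (ι → ℝ)).symm.toLinearMap ∘ₗ
      LinearMap.applyₗ x ∘ₗ Matrix.toLin'.toLinearMap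
  rw [← SetLike.mem_coe, doublyStochastic_eq_convexHull_permMatrix] at hM
  obtain ⟨_, ⟨σ, rfl⟩, hσ⟩ :=
    (convexOn_univ_norm.comp_linearMap L).exists_ge_of_mem_convexHull (by simp) hM
  simpa [L, Matrix.permMatrix_mulVec, norm_toLp_comp_perm] using hσ

lemma norm_toLp_const_inv_card_le (b : ℕ) :
    ‖WithLp.toLp p (fun _ : Fin b => (b : ℝ)⁻¹)‖ ≤
      1 / (b : ℝ) ^ (if p = ⊤ then (1 : ℝ) else 1 - 1 / p.toReal) := by
  rcases Nat.eq_zero_or_pos b with rfl | hb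
  · simp only [Subsingleton.elim (WithLp.toLp p _) 0, norm_zero]
    positivity
  have : Nonempty (Fin b) := ⟨⟨0, hb⟩⟩
  have hb' : (0 : ℝ) < b := by exact_mod_cast hb
  change ‖WithLp.toLp p (Function.const (Fin b) (b : ℝ)⁻¹)‖ ≤ _
  rw [norm_toLp_const', Fintype.card_fin, NNReal.coe_natCast, Real.norm_of_nonneg (by positivity)]
  refine le_of_eq ?_
  split_ifs with hp
  · simp [hp]
  · rw [ENNReal.toReal_div, ENNReal.toReal_one, one_div ((b : ℝ) ^ _), ← Real.rpow_neg hb'.le,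
      neg_sub, Real.rpow_sub hb', Real.rpow_one, div_eq_mul_inv _ (b : ℝ)]

end PiLp

lemma IsCP.posSemidef_apply {a b : Type*} [Fintype a] [Fintype b]
    {Φ : Matrix a a ℂ → Matrix b b ℂ} (hΦ : IsCP Φ) {ρ : Matrix a a ℂ} (hρ : ρ.PosSemidef) :
    (Φ ρ).PosSemidef := by
  obtain ⟨s, K, hK⟩ := hΦ
  rw [hK]
  exact posSemidef_sum _ fun i _ => hρ.mul_mul_conjTranspose_same (K i)

section Spectra

variable {n : Type*} [Fintype n] [DecidableEq n] {p : ℝ≥0∞} [Fact (1 ≤ p)]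

lemma singularValues_nonneg (X : Matrix n n ℂ) (i : n) : 0 ≤ singularValues X i :=
  Real.sqrt_nonneg _

lemma schattenNorm_eq_norm_toLp_singularValues (X : Matrix n n ℂ) :
    schattenNorm p X = ‖WithLp.toLp p (singularValues X)‖ := by
  have hsv (i : n) : ‖singularValues X i‖ = singularValues X i :=
    Real.norm_of_nonneg (singularValues_nonneg X i)
  rcases p.dichotomy with rfl | hp
  · simp [schattenNorm, PiLp.norm_eq_ciSup, hsv]
  · have hp0 : 0 < p.toReal := by linarith
    simp [schattenNorm, PiLp.norm_eq_sum hp0, hsv, (show p ≠ ⊤ by rintro rfl; simp at hp0)]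

namespace Matrix

lemma map_normSq_mem_doublyStochastic {U : Matrix n n ℂ} (hU : U ∈ unitaryGroup n ℂ) :
    U.map Complex.normSq ∈ doublyStochastic ℝ n := by
  have hsum (i : n) (M : Matrix n n ℂ) (hM : (M * star M) i i = 1) :
      ∑ j, Complex.normSq (M i j) = 1 := by
    rw [mul_apply] at hM
    simp only [star_apply, RCLike.star_def, Complex.mul_conj] at hM
    exact_mod_cast hM
  refine mem_doublyStochastic_iff_sum.mpr
    ⟨fun _ _ => Complex.normSq_nonneg _, fun i => ?_, fun j => ?_⟩
  · simpa using hsum i U (by rw [mem_unitaryGroup_iff.mp hU, one_apply_eq])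
  · have := hsum j (star U) (by rw [star_star, mem_unitaryGroup_iff'.mp hU, one_apply_eq])
    simpa [star_apply] using this

namespace IsHermitian

variable {A : Matrix n n ℂ} (hA : A.IsHermitian)
include hA

lemma map_eigenvalues_conjTranspose_mul_self :
    Finset.univ.val.map (posSemidef_conjTranspose_mul_self A).1.eigenvalues =
      Finset.univ.val.map (fun i => hA.eigenvalues i ^ 2) := by
  have hsq : Aᴴ * A = cfc (· ^ 2 : ℝ → ℝ) A := by
    rw [cfc_pow_id A 2 hA.isSelfAdjoint, hA.eq, sq]
  have hroots : (Aᴴ * A).charpoly.roots =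
      Finset.univ.val.map (fun i => ((hA.eigenvalues i ^ 2 : ℝ) : ℂ)) := by
    rw [hsq, hA.charpoly_cfc_eq, Polynomial.roots_prod _ _
      (Finset.prod_ne_zero_iff.mpr fun i _ => Polynomial.X_sub_C_ne_zero _)]
    simp only [Polynomial.roots_X_sub_C, Multiset.bind_singleton]
    rfl
  rw [(posSemidef_conjTranspose_mul_self A).1.roots_charpoly_eq_eigenvalues] at hroots
  refine Multiset.map_injective Complex.ofReal_injective ?_
  simpa [Multiset.map_map] using hroots

lemma map_singularValues :
    Finset.univ.val.map (singularValues A) =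
      Finset.univ.val.map (fun i => |hA.eigenvalues i|) := by
  unfold singularValues
  have := congrArg (Multiset.map Real.sqrt) hA.map_eigenvalues_conjTranspose_mul_self
  simpa [Multiset.map_map, Function.comp_def, Real.sqrt_sq_eq_abs] using this

lemma schattenNorm_eq_norm_toLp_eigenvalues :
    schattenNorm p A = ‖WithLp.toLp p hA.eigenvalues‖ := by
  rw [schattenNorm_eq_norm_toLp_singularValues]
  refine PiLp.norm_toLp_eq_of_map_abs_eq ?_
  simp_rw [abs_of_nonneg (singularValues_nonneg A _), hA.map_singularValues]

lemma re_diag_unitary_conj (U : Matrix n n ℂ) :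
    (fun i => ((star U * A * U) i i).re) =
      (star U * (hA.eigenvectorUnitary : Matrix n n ℂ)).map Complex.normSq *ᵥ hA.eigenvalues := by
  set W := star U * (hA.eigenvectorUnitary : Matrix n n ℂ)
  have hconj : star U * A * U = W * diagonal (RCLike.ofReal ∘ hA.eigenvalues) * star W := by
    conv_lhs => rw [hA.spectral_theorem, Unitary.conjStarAlgAut_apply]
    simp only [W, star_mul, star_star, Matrix.mul_assoc]
  ext i
  rw [hconj, mul_apply, mulVec, dotProduct, Complex.re_sum]
  refine Finset.sum_congr rfl fun j _ => ?_
  rw [mul_diagonal, star_apply, RCLike.star_def, mul_right_comm, Complex.mul_conj, map_apply]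
  simp

lemma norm_toLp_re_diag_unitary_conj_le {U : Matrix n n ℂ} (hU : U ∈ unitaryGroup n ℂ) :
    ‖WithLp.toLp p (fun i => ((star U * A * U) i i).re)‖ ≤ ‖WithLp.toLp p hA.eigenvalues‖ := by
  rw [hA.re_diag_unitary_conj U]
  exact PiLp.norm_toLp_mulVec_le
    (map_normSq_mem_doublyStochastic (mul_mem (Unitary.star_mem hU) hA.eigenvectorUnitary.2)) _

omit hA in
lemma abs_eigenvalues_le_of_loewnerLE {X B : Matrix n n ℂ} (hX : X.IsHermitian)
    (hlower : loewnerLE (-B) X) (hupper : loewnerLE X B) (i : n) :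
    |hX.eigenvalues i| ≤ ((star (hX.eigenvectorUnitary : Matrix n n ℂ) * B *
      (hX.eigenvectorUnitary : Matrix n n ℂ)) i i).re := by
  set U : Matrix n n ℂ := (hX.eigenvectorUnitary : Matrix n n ℂ)
  have hdiag : (star U * X * U) i i = hX.eigenvalues i := by
    have := hX.conjStarAlgAut_star_eigenvectorUnitary
    rw [Unitary.conjStarAlgAut_star_apply] at this
    simp [U, this]
  have hdiag_nonneg {Y : Matrix n n ℂ} (hY : Y.PosSemidef) : 0 ≤ ((star U * Y * U) i i).re :=
    (Complex.nonneg_iff.mp (hY.conjTranspose_mul_mul_same U).diag_nonneg).1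
  have h1 := hdiag_nonneg hupper
  have h2 := hdiag_nonneg hlower
  simp only [Matrix.mul_sub, Matrix.sub_mul, sub_neg_eq_add, Matrix.mul_add, Matrix.add_mul,
    sub_apply, add_apply, Complex.sub_re, Complex.add_re, hdiag, Complex.ofReal_re] at h1 h2
  rw [abs_le]
  constructor <;> linarith

end IsHermitian

end Matrix

end Spectra

theorem stmt1_general (a b : ℕ)
    (N Nh : Matrix (Fin a) (Fin a) ℂ → Matrix (Fin b) (Fin b) ℂ)
    (hN : IsCPTP N)
    (ε : ℝ) (hε0 : 0 < ε)
    (happrox : ∀ ρ : Matrix (Fin a) (Fin a) ℂ, IsDensity ρ →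
      loewnerLE (-((ε : ℂ) • (N ρ + ((b : ℂ))⁻¹ • 1))) (Nh ρ - N ρ) ∧
      loewnerLE (Nh ρ - N ρ) ((ε : ℂ) • (N ρ + ((b : ℂ))⁻¹ • 1))) :
    ∀ p : ℝ≥0∞, 1 ≤ p → ∀ ρ : Matrix (Fin a) (Fin a) ℂ, IsDensity ρ →
      schattenNorm p (Nh ρ - N ρ) ≤
        ε * (schattenNorm p (N ρ) +
          1 / (b : ℝ) ^ (if p = ⊤ then (1 : ℝ) else 1 - 1 / p.toReal)) := by
  intro p hp ρ hρ
  have : Fact (1 ≤ p) := ⟨hp⟩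
  obtain ⟨hlower, hupper⟩ := happrox ρ hρ
  have hA : (N ρ).PosSemidef := hN.1.posSemidef_apply hρ.1
  have hB : ((ε : ℂ) • (N ρ + ((b : ℂ))⁻¹ • 1)).PosSemidef :=
    (hA.add (PosSemidef.one.smul (by positivity))).smul (by exact_mod_cast hε0.le)
  have hX : (Nh ρ - N ρ).IsHermitian := by simpa using hB.1.sub hupper.1
  set U : Matrix (Fin b) (Fin b) ℂ := (hX.eigenvectorUnitary : Matrix (Fin b) (Fin b) ℂ)
  set d : Fin b → ℝ := fun i => ((star U * N ρ * U) i i).re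
  have hbound (i : Fin b) : |hX.eigenvalues i| ≤ ε * (d i + (b : ℝ)⁻¹) := by
    refine (hX.abs_eigenvalues_le_of_loewnerLE hlower hupper i).trans_eq ?_
    have hU : star U * U = 1 := Unitary.coe_star_mul_self hX.eigenvectorUnitary
    have hconj : star U * ((ε : ℂ) • (N ρ + ((b : ℂ))⁻¹ • 1)) * U =
        (ε : ℂ) • (star U * N ρ * U + ((b : ℂ))⁻¹ • 1) := by
      simp only [Matrix.mul_smul, Matrix.smul_mul, Matrix.mul_add, Matrix.add_mul,
        Matrix.mul_one, hU]
    rw [hconj]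
    simp [d]
  calc schattenNorm p (Nh ρ - N ρ) = ‖WithLp.toLp p hX.eigenvalues‖ :=
        hX.schattenNorm_eq_norm_toLp_eigenvalues
    _ ≤ ‖WithLp.toLp p (fun i => ε * (d i + (b : ℝ)⁻¹))‖ :=
        PiLp.norm_toLp_le_norm_toLp fun i => (hbound i).trans (le_abs_self _)
    _ = ε * ‖WithLp.toLp p d + WithLp.toLp p (fun _ : Fin b => (b : ℝ)⁻¹)‖ := by
        rw [← WithLp.toLp_add, ← norm_smul_of_nonneg hε0.le, ← WithLp.toLp_smul]
        rfl
    _ ≤ ε * (schattenNorm p (N ρ) +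
          1 / (b : ℝ) ^ (if p = ⊤ then (1 : ℝ) else 1 - 1 / p.toReal)) := by
        rw [hA.1.schattenNorm_eq_norm_toLp_eigenvalues]
        gcongr
        exact (norm_add_le _ _).trans (add_le_add
          (hA.1.norm_toLp_re_diag_unitary_conj_le hX.eigenvectorUnitary.2)
          (PiLp.norm_toLp_const_inv_card_le b))

/-- the two-sided Loewner approximation implies Schatten `p`-norm
approximation `‖N̂(ρ) − N(ρ)‖_p ≤ ε (‖N(ρ)‖_p + 1/|B|^{1−1/p})` for all `p ∈ [1,∞]`. -/
theorem stmt1 (a b : ℕ)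
    (N Nh : Matrix (Fin a) (Fin a) ℂ → Matrix (Fin b) (Fin b) ℂ)
    (hN : IsCPTP N) (hNh : IsCP Nh)
    (ε : ℝ) (hε0 : 0 < ε) (hε1 : ε < 1)
    (happrox : ∀ ρ : Matrix (Fin a) (Fin a) ℂ, IsDensity ρ →
      loewnerLE (-((ε : ℂ) • (N ρ + ((b : ℂ))⁻¹ • 1))) (Nh ρ - N ρ) ∧
      loewnerLE (Nh ρ - N ρ) ((ε : ℂ) • (N ρ + ((b : ℂ))⁻¹ • 1))) :
    ∀ p : ℝ≥0∞, 1 ≤ p → ∀ ρ : Matrix (Fin a) (Fin a) ℂ, IsDensity ρ →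
      schattenNorm p (Nh ρ - N ρ) ≤
        ε * (schattenNorm p (N ρ) +
          1 / (b : ℝ) ^ (if p = ⊤ then (1 : ℝ) else 1 - 1 / p.toReal)) :=
  stmt1_general a b N Nh hN ε hε0 happrox

end
end

section
/- Let A, B be finite-dimensional complex Hilbert spaces with |A| ≤ |B|. Let (x_i)_{i=1}^{|B|} be an orthonormal basis of B, let (e_j)_{j=1}^{|A|} be an orthonormal basis of A, and for 1 ≤ i ≤ |B| set ψ_i = (1/√|A|)·Σ_{j=1}^{|A|} e^{2πi ji/|B|} e_j. Define the quantum-classical channel M : L(A) → L(B) by M(X) = (|A|/|B|)·Σ_{i=1}^{|B|} ⟨ψ_i| X |ψ_i⟩ |x_i⟩⟨x_i|. Then M is a CPTP map with Kraus rank at most |B|, and for every 0 < ε < 1/2, every completely positive map M̂ : L(A) → L(B) satisfying (1−ε)M(R) − ε·(tr R)·1_B/|B| ≤ M̂(R) ≤ (1+ε)M(R) + ε·(tr R)·1_B/|B| (Loewner order) for all positive semidefinite R on A has Kraus rank at least |B|. -/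
open scoped Kronecker ENNReal ComplexOrder
open Matrix MeasureTheory

noncomputable section
attribute [local instance] Classical.propDecidable

/-- The quantum-classical channel `M(X) = (|A|/|B|) ∑_i ⟨ψ_i|X|ψ_i⟩ |x_i⟩⟨x_i|`. -/
def qcChan (a b : ℕ) (x : Fin b → (Fin b → ℂ)) (ψ : Fin b → (Fin a → ℂ)) :
    Matrix (Fin a) (Fin a) ℂ → Matrix (Fin b) (Fin b) ℂ :=
  fun X => ((a : ℂ) / (b : ℂ)) • ∑ i, (star (ψ i) ⬝ᵥ X *ᵥ ψ i) • projVec (x i)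

/-! The Kraus operators `√(|A|/|B|) |x_i⟩⟨ψ_i|` give the upper bound on the Kraus rank, and trace
preservation reduces to the tight-frame identity `∑ |ψ_i⟩⟨ψ_i| = (|B|/|A|) 1`, i.e. to the
orthogonality of the rows of the `|A| × |B|` Fourier matrix.

For the lower bound feed `M̂` the pure state `R = |e_1⟩⟨e_1|`. Every `|⟨e_1, ψ_i⟩|²` equals `1/|A|`,
so `M(R) = 1/|B|` and the lower Loewner bound makes `M̂(R) ≥ (1 - 2ε)/|B|` positive definite.
But `M̂(R) = ∑_t |K_t e_1⟩⟨K_t e_1|` has rank at most the number of Kraus operators `K_t`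
of `M̂`. -/

section ProjVec

variable {m n ι κ : Type*}

lemma projVec_eq_vecMulVec (v : n → ℂ) : projVec v = vecMulVec v (star v) := rfl

lemma sum_projVec_eq_mul_conjTranspose [Fintype ι] (v : ι → n → ℂ) :
    ∑ i, projVec (v i) = (of v)ᵀ * (of v)ᵀᴴ := by
  ext k l
  simp [projVec, Matrix.mul_apply, Matrix.sum_apply]

lemma conjTranspose_mul_apply_eq_dotProduct [Fintype n] (v : ι → n → ℂ) (w : κ → n → ℂ)
    (i : ι) (j : κ) :
    ((of v)ᵀᴴ * (of w)ᵀ) i j = star (v i) ⬝ᵥ w j :=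
  rfl

lemma conjTranspose_mul_self_of_orthonormal [Fintype n] [DecidableEq ι] {v : ι → n → ℂ}
    (hv : ∀ i j, star (v i) ⬝ᵥ v j = if i = j then 1 else 0) :
    (of v)ᵀᴴ * (of v)ᵀ = 1 := by
  ext i j
  rw [conjTranspose_mul_apply_eq_dotProduct, hv, one_apply]

lemma sum_projVec_of_orthonormal [Fintype n] [DecidableEq n] {v : n → n → ℂ}
    (hv : ∀ i j, star (v i) ⬝ᵥ v j = if i = j then 1 else 0) :
    ∑ i, projVec (v i) = 1 := by
  rw [sum_projVec_eq_mul_conjTranspose,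
    mul_eq_one_comm.mp (conjTranspose_mul_self_of_orthonormal hv)]

lemma posSemidef_projVec [Fintype n] (v : n → ℂ) : (projVec v).PosSemidef :=
  posSemidef_vecMulVec_self_star v

lemma trace_projVec [Fintype n] (v : n → ℂ) : (projVec v).trace = star v ⬝ᵥ v := by
  rw [projVec_eq_vecMulVec, trace_vecMulVec, dotProduct_comm]

lemma dotProduct_projVec_mulVec [Fintype n] (v w : n → ℂ) :
    star w ⬝ᵥ projVec v *ᵥ w = (‖star v ⬝ᵥ w‖ : ℂ) ^ 2 := by
  rw [projVec_eq_vecMulVec, vecMulVec_mulVec, op_smul_eq_smul, dotProduct_smul, smul_eq_mul,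
    star_dotProduct (v := w) (w := v), ← Complex.mul_conj']
  rfl

lemma mul_projVec_mul_conjTranspose [Fintype n] (K : Matrix m n ℂ) (v : n → ℂ) :
    K * projVec v * Kᴴ = projVec (K *ᵥ v) := by
  rw [projVec_eq_vecMulVec, projVec_eq_vecMulVec, mul_vecMulVec, vecMulVec_mul, star_mulVec]

lemma vecMulVec_mul_mul_conjTranspose [Fintype n] (u : m → ℂ) (v : n → ℂ) (X : Matrix n n ℂ) :
    vecMulVec u (star v) * X * (vecMulVec u (star v))ᴴ = (star v ⬝ᵥ X *ᵥ v) • projVec u := by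
  rw [vecMulVec_mul, conjTranspose_vecMulVec, star_star, vecMulVec_mul_vecMulVec,
    ← dotProduct_mulVec, vecMulVec_smul, projVec_eq_vecMulVec]

end ProjVec

section Kraus

variable {a b : Type*} [Fintype a] [Fintype b]

lemma isTP_of_sum_conjTranspose_mul_self [DecidableEq a] {Φ : Matrix a a ℂ → Matrix b b ℂ}
    {s : ℕ} {K : Fin s → Matrix b a ℂ} (hK : HasKraus Φ K) (hK1 : ∑ i, (K i)ᴴ * K i = 1) :
    IsTP Φ := by
  intro X
  rw [hK, trace_sum]
  simp_rw [trace_mul_cycle (K _), ← trace_sum, ← Finset.sum_mul, hK1, one_mul]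

lemma card_le_of_hasKraus_of_posDef [DecidableEq b] {Φ : Matrix a a ℂ → Matrix b b ℂ} {s : ℕ}
    {K : Fin s → Matrix b a ℂ} (hK : HasKraus Φ K) (v : a → ℂ) (hpos : (Φ (projVec v)).PosDef) :
    Fintype.card b ≤ s := by
  have hΦ : Φ (projVec v) = (of fun i => K i *ᵥ v)ᵀ * (of fun i => K i *ᵥ v)ᵀᴴ := by
    rw [hK, ← sum_projVec_eq_mul_conjTranspose]
    simp_rw [mul_projVec_mul_conjTranspose]
  calc Fintype.card b = (Φ (projVec v)).rank := (rank_of_isUnit _ hpos.isUnit).symm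
    _ ≤ (of fun i => K i *ᵥ v)ᵀ.rank := by rw [hΦ]; exact rank_mul_le_left _ _
    _ ≤ s := (rank_le_card_width _).trans_eq (Fintype.card_fin s)

lemma card_le_krausRank_of_posDef [DecidableEq b] {Φ : Matrix a a ℂ → Matrix b b ℂ}
    (hΦ : IsCP Φ) (v : a → ℂ) (hpos : (Φ (projVec v)).PosDef) : Fintype.card b ≤ krausRank Φ :=
  le_csInf hΦ fun _ ⟨_, hK⟩ => card_le_of_hasKraus_of_posDef hK v hpos

end Kraus

lemma posDef_of_smul_one_loewnerLE {n : Type*} [Fintype n] [DecidableEq n] {c : ℝ} (hc : 0 < c)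
    {X : Matrix n n ℂ} (h : loewnerLE ((c : ℂ) • 1) X) : X.PosDef := by
  have hsum := PosDef.posSemidef_add h (PosDef.one.smul (Complex.zero_lt_real.mpr hc))
  rwa [sub_add_cancel] at hsum

lemma sum_pow_succ_eq_zero {K : Type*} [Field K] {η : K} {b : ℕ} (hηb : η ^ b = 1)
    (hη1 : η ≠ 1) : ∑ i : Fin b, η ^ ((i : ℕ) + 1) = 0 := by
  simp_rw [pow_succ]
  rw [← Finset.sum_mul, Fin.sum_univ_eq_sum_range (η ^ ·), geom_sum_eq hη1, hηb]
  simp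

-- The paper's `e^{2πi j i / |B|}` with its 1-based indices `j, i`.
def fourierMatrix (a b : ℕ) : Matrix (Fin a) (Fin b) ℂ :=
  of fun j i => Complex.exp (2 * Real.pi * Complex.I * (((j.1 : ℕ) + 1) * ((i.1 : ℕ) + 1)) / b)

lemma fourierMatrix_apply_eq_pow {a b : ℕ} (j : Fin a) (i : Fin b) :
    fourierMatrix a b j i =
      Complex.exp (2 * Real.pi * Complex.I / b) ^ ((j.1 + 1) * (i.1 + 1)) := by
  rw [← Complex.exp_nat_mul, fourierMatrix, of_apply]
  congr 1
  push_cast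
  ring

lemma norm_fourierMatrix_apply (a b : ℕ) (j : Fin a) (i : Fin b) :
    ‖fourierMatrix a b j i‖ = 1 := by
  simp [fourierMatrix, Complex.norm_exp]

lemma fourierMatrix_mul_conjTranspose {a b : ℕ} (hab : a ≤ b) :
    fourierMatrix a b * (fourierMatrix a b)ᴴ = (b : ℂ) • 1 := by
  ext j j'
  have hb : b ≠ 0 := (j.pos.trans_le hab).ne'
  set ζ := Complex.exp (2 * Real.pi * Complex.I / b) with hζ_def
  have hζ : IsPrimitiveRoot ζ b := Complex.isPrimitiveRoot_exp b hb
  have hζ0 : ζ ≠ 0 := hζ.ne_zero hb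
  have hterm : ∀ i : Fin b, fourierMatrix a b j i * star (fourierMatrix a b j' i) =
      (ζ ^ ((j : ℤ) - j')) ^ ((i : ℕ) + 1) := by
    intro i
    have hstar : star ζ = ζ⁻¹ := (Complex.inv_eq_conj (hζ.norm'_eq_one hb)).symm
    rw [fourierMatrix_apply_eq_pow, fourierMatrix_apply_eq_pow, ← hζ_def, star_pow, hstar,
      ← zpow_natCast, ← zpow_natCast, _root_.inv_zpow', ← zpow_add₀ hζ0, ← zpow_natCast,
      ← _root_.zpow_mul]
    congr 1
    push_cast
    ring
  simp only [mul_apply, conjTranspose_apply, hterm, Matrix.smul_apply, one_apply, smul_eq_mul]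
  split_ifs with h
  · simp [h]
  · have hne : ζ ^ ((j : ℤ) - j') ≠ 1 := by
      rw [Ne, hζ.zpow_eq_one_iff_dvd]
      intro hdvd
      have := Int.eq_zero_of_abs_lt_dvd hdvd (by rw [abs_sub_lt_iff]; omega)
      exact h (Fin.ext (by omega))
    have hpow : (ζ ^ ((j : ℤ) - j')) ^ b = 1 := by
      rw [← zpow_natCast, ← _root_.zpow_mul, mul_comm, _root_.zpow_mul, zpow_natCast,
        hζ.pow_eq_one, _root_.one_zpow]
    rw [sum_pow_succ_eq_zero hpow hne, mul_zero]

lemma star_ofReal_sqrt_mul_self {r : ℝ} (hr : 0 ≤ r) :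
    star (Real.sqrt r : ℂ) * Real.sqrt r = r := by
  rw [Complex.star_def, Complex.conj_ofReal, ← Complex.ofReal_mul, Real.mul_self_sqrt hr]

lemma star_inv_sqrt_mul_inv_sqrt (a : ℕ) :
    star ((Real.sqrt a : ℂ))⁻¹ * ((Real.sqrt a : ℂ))⁻¹ = (a : ℂ)⁻¹ := by
  rw [star_inv₀, ← mul_inv, star_ofReal_sqrt_mul_self (Nat.cast_nonneg a), Complex.ofReal_natCast]

def fourierFrame (a b : ℕ) (e : Fin a → Fin a → ℂ) : Fin b → Fin a → ℂ :=
  fun i t => ((Real.sqrt a : ℂ))⁻¹ * ∑ j : Fin a, fourierMatrix a b j i * e j t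

section FourierFrame

variable {a b : ℕ} {e : Fin a → Fin a → ℂ}

lemma transpose_of_fourierFrame :
    (of (fourierFrame a b e))ᵀ = ((Real.sqrt a : ℂ))⁻¹ • ((of e)ᵀ * fourierMatrix a b) := by
  ext t i
  simp [fourierFrame, mul_apply, mul_comm]

lemma sum_projVec_fourierFrame (hab : a ≤ b)
    (he : ∀ i j, star (e i) ⬝ᵥ e j = if i = j then 1 else 0) :
    ∑ i, projVec (fourierFrame a b e i) = ((b : ℂ) / a) • 1 := by
  have hE : (of e)ᵀ * (of e)ᵀᴴ = 1 :=
    mul_eq_one_comm.mp (conjTranspose_mul_self_of_orthonormal he)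
  calc ∑ i, projVec (fourierFrame a b e i)
      = (star ((Real.sqrt a : ℂ))⁻¹ * ((Real.sqrt a : ℂ))⁻¹) •
          ((of e)ᵀ * (fourierMatrix a b * (fourierMatrix a b)ᴴ) * (of e)ᵀᴴ) := by
        rw [sum_projVec_eq_mul_conjTranspose, transpose_of_fourierFrame, conjTranspose_smul,
          conjTranspose_mul, Matrix.smul_mul, Matrix.mul_smul, smul_smul, mul_comm,
          Matrix.mul_assoc, Matrix.mul_assoc, Matrix.mul_assoc]
    _ = ((b : ℂ) / a) • 1 := by
        rw [star_inv_sqrt_mul_inv_sqrt, fourierMatrix_mul_conjTranspose hab, Matrix.mul_smul,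
          Matrix.smul_mul, Matrix.mul_one, hE, smul_smul, div_eq_mul_inv, mul_comm]

lemma dotProduct_fourierFrame (he : ∀ i j, star (e i) ⬝ᵥ e j = if i = j then 1 else 0)
    (j : Fin a) (i : Fin b) :
    star (e j) ⬝ᵥ fourierFrame a b e i = ((Real.sqrt a : ℂ))⁻¹ * fourierMatrix a b j i := by
  rw [← conjTranspose_mul_apply_eq_dotProduct, transpose_of_fourierFrame, Matrix.mul_smul,
    ← Matrix.mul_assoc, conjTranspose_mul_self_of_orthonormal he, Matrix.one_mul,
    Matrix.smul_apply, smul_eq_mul]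

lemma norm_dotProduct_fourierFrame_sq (he : ∀ i j, star (e i) ⬝ᵥ e j = if i = j then 1 else 0)
    (j : Fin a) (i : Fin b) : ‖star (e j) ⬝ᵥ fourierFrame a b e i‖ ^ 2 = (a : ℝ)⁻¹ := by
  rw [dotProduct_fourierFrame he, norm_mul, norm_fourierMatrix_apply, mul_one, norm_inv,
    Complex.norm_real, Real.norm_of_nonneg (Real.sqrt_nonneg _), inv_pow,
    Real.sq_sqrt (Nat.cast_nonneg a)]

end FourierFrame

section QCChannel

variable {a b : ℕ} {x : Fin b → Fin b → ℂ} {ψ : Fin b → Fin a → ℂ}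

lemma hasKraus_qcChan :
    HasKraus (qcChan a b x ψ) fun i => (Real.sqrt (a / b) : ℂ) • vecMulVec (x i) (star (ψ i)) := by
  intro X
  simp_rw [qcChan, Finset.smul_sum, conjTranspose_smul, Matrix.smul_mul, Matrix.mul_smul,
    smul_smul, mul_comm _ (star _), star_ofReal_sqrt_mul_self (by positivity : (0 : ℝ) ≤ a / b),
    vecMulVec_mul_mul_conjTranspose, smul_smul]
  push_cast
  rfl

lemma isTP_qcChan (ha : a ≠ 0) (hb : b ≠ 0) (hx : ∀ i, star (x i) ⬝ᵥ x i = 1)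
    (hψ : ∑ i, projVec (ψ i) = ((b : ℂ) / a) • 1) : IsTP (qcChan a b x ψ) := by
  refine isTP_of_sum_conjTranspose_mul_self hasKraus_qcChan ?_
  simp_rw [conjTranspose_smul, Matrix.smul_mul, Matrix.mul_smul, smul_smul,
    conjTranspose_vecMulVec, star_star, vecMulVec_mul_vecMulVec, hx, one_smul,
    ← projVec_eq_vecMulVec, ← Finset.smul_sum, hψ, smul_smul,
    star_ofReal_sqrt_mul_self (by positivity : (0 : ℝ) ≤ a / b)]
  push_cast
  rw [div_mul_div_cancel₀ (Nat.cast_ne_zero.mpr hb), div_self (Nat.cast_ne_zero.mpr ha)]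
  exact one_smul ℂ _

lemma qcChan_projVec (ha : a ≠ 0) (hx : ∀ i j, star (x i) ⬝ᵥ x j = if i = j then 1 else 0)
    {v : Fin a → ℂ} (hv : ∀ i, ‖star v ⬝ᵥ ψ i‖ ^ 2 = (a : ℝ)⁻¹) :
    qcChan a b x ψ (projVec v) = (b : ℂ)⁻¹ • 1 := by
  have hq : ∀ i, star (ψ i) ⬝ᵥ projVec v *ᵥ ψ i = (a : ℂ)⁻¹ := fun i => by
    rw [dotProduct_projVec_mulVec, ← Complex.ofReal_pow, hv, Complex.ofReal_inv,
      Complex.ofReal_natCast]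
  rw [qcChan]
  simp_rw [hq, ← Finset.smul_sum, sum_projVec_of_orthonormal hx, smul_smul]
  congr 1
  field_simp

end QCChannel

/-- the quantum-classical channel built on a tight frame is CPTP with
Kraus rank at most `|B|`, and any CP map approximating it in the two-sided Loewner sense
has Kraus rank at least `|B|`. -/
theorem stmt10 (a b : ℕ) (ha : 0 < a) (hab : a ≤ b)
    (x : Fin b → (Fin b → ℂ))
    (hx : ∀ i j, star (x i) ⬝ᵥ x j = if i = j then 1 else 0)
    (e : Fin a → (Fin a → ℂ))
    (he : ∀ i j, star (e i) ⬝ᵥ e j = if i = j then 1 else 0)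
    (ψ : Fin b → (Fin a → ℂ))
    (hψ : ∀ i, ψ i = fun t => ((Real.sqrt a : ℂ))⁻¹ *
      ∑ j : Fin a, Complex.exp
        (2 * Real.pi * Complex.I * (((j.1 : ℕ) + 1) * ((i.1 : ℕ) + 1)) / b) * e j t) :
    IsCPTP (qcChan a b x ψ) ∧
    (∃ K : Fin b → Matrix (Fin b) (Fin a) ℂ, HasKraus (qcChan a b x ψ) K) ∧
    ∀ ε : ℝ, 0 < ε → ε < 1 / 2 →
      ∀ Mh : Matrix (Fin a) (Fin a) ℂ → Matrix (Fin b) (Fin b) ℂ, IsCP Mh →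
        (∀ R : Matrix (Fin a) (Fin a) ℂ, R.PosSemidef →
          loewnerLE (((1 - ε : ℝ) : ℂ) • qcChan a b x ψ R - ((ε : ℂ) * R.trace / b) • 1)
            (Mh R) ∧
          loewnerLE (Mh R)
            (((1 + ε : ℝ) : ℂ) • qcChan a b x ψ R + ((ε : ℂ) * R.trace / b) • 1)) →
        b ≤ krausRank Mh := by
  have hb : b ≠ 0 := (ha.trans_le hab).ne'
  obtain rfl : ψ = fourierFrame a b e := funext hψ
  refine ⟨⟨⟨b, _, hasKraus_qcChan⟩, isTP_qcChan ha.ne' hb (fun i => by simp [hx])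
    (sum_projVec_fourierFrame hab he)⟩, ⟨_, hasKraus_qcChan⟩, ?_⟩
  intro ε hε hε' Mh hMh happrox
  let v := e ⟨0, ha⟩
  have hM : qcChan a b x (fourierFrame a b e) (projVec v) = (b : ℂ)⁻¹ • 1 :=
    qcChan_projVec ha.ne' hx (norm_dotProduct_fourierFrame_sq he _)
  have htr : (projVec v).trace = 1 := by simp [trace_projVec, v, he]
  have hlow : loewnerLE ((((1 - 2 * ε) / b : ℝ) : ℂ) • 1) (Mh (projVec v)) := by
    convert (happrox _ (posSemidef_projVec v)).1 using 2
    rw [hM, htr, smul_smul, ← sub_smul]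
    push_cast
    ring_nf
  simpa using card_le_krausRank_of_posDef hMh v
    (posDef_of_smul_one_loewnerLE (div_pos (by linarith) (by positivity)) hlow)
end
end
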